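/- arXiv:math/0607815 — 2 statements merged into one kernel-verified Lean document; each statement's English description precedes it below -/
import Mathlib

section
/- Let K be a totally real field of prime degree n, 𝒪 an order in K of discriminant D, and λ ∈ 𝒪 with λ ∉ ℤ. Then the sup norm of the vector of archimedean embeddings of λ satisfies max_i |σ_i(λ)| ≫_n D^{1/(n(n−1))}. -/
/-!
Since `n` is prime and `λ` is an algebraic integer outside `ℚ`, the powers `1, λ, …, λ^(n-1)`
form a `ℚ`-basis of `K` lying in `𝒪`. Writing them in an integral basis of `𝒪` multiplies the
discriminant by the square of a nonzero integer, so `D ≤ |disc(1, λ, …, λ^(n-1))|`. The latter is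
the squared Vandermonde determinant `∏_{i<j} (σ_j λ - σ_i λ)²`, whose `n(n-1)/2` factors are each
at most `(2 max_i |σ_i λ|)²`. Hence `D ≤ (2 max_i |σ_i λ|)^(n(n-1))`.
-/

open NumberField Finset Matrix Module

theorem Rat.notMem_range_algebraMap_of_isIntegral {K : Type*} [Field K] [Algebra ℚ K] {x : K}
    (hx : IsIntegral ℤ x) (hxZ : ∀ m : ℤ, (m : K) ≠ x) : x ∉ (algebraMap ℚ K).range := by
  rintro ⟨q, rfl⟩
  obtain ⟨m, rfl⟩ := IsIntegrallyClosed.isIntegral_iff.mp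
    ((isIntegral_algebraMap_iff (algebraMap ℚ K).injective).mp hx)
  exact hxZ m (by simp)

theorem minpoly.natDegree_eq_finrank_of_prime {F L : Type*} [Field F] [Field L] [Algebra F L]
    [FiniteDimensional F L] (hp : (finrank F L).Prime) {x : L}
    (hx : x ∉ (algebraMap F L).range) : (minpoly F x).natDegree = finrank F L :=
  (hp.eq_one_or_self_of_dvd _ (minpoly.degree_dvd (IsIntegral.of_finite F x))).resolve_left
    fun h => hx (minpoly.natDegree_eq_one_iff.mp h)

theorem Algebra.discr_pow_ne_zero {F L : Type*} [Field F] [Field L] [Algebra F L]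
    [FiniteDimensional F L] [Algebra.IsSeparable F L] {x : L}
    (hx : (minpoly F x).natDegree = finrank F L) :
    discr F (fun i : Fin (finrank F L) => x ^ (i : ℕ)) ≠ 0 := by
  have hli : LinearIndependent F fun i : Fin (finrank F L) => x ^ (i : ℕ) :=
    hx ▸ linearIndependent_pow x
  rw [← coe_basisOfLinearIndependentOfCardEqFinrank' _ hli (Fintype.card_fin _)]
  exact discr_not_zero_of_basis F _

theorem Algebra.abs_discr_le_of_subalgebra {ι K : Type*} [Fintype ι] [DecidableEq ι] [Field K]
    [Algebra ℚ K] {O : Subalgebra ℤ K} (b : Basis ι ℤ O) (v : ι → O)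
    (hv : discr ℚ (fun i => (v i : K)) ≠ 0) :
    |discr ℚ fun i => (b i : K)| ≤ |discr ℚ fun i => (v i : K)| := by
  set P : Matrix ι ι ℤ := Matrix.of fun i j => b.repr (v i) j
  have hv_eq : (fun i => (v i : K)) =
      (P.map (Int.castRingHom ℚ)).map (algebraMap ℚ K) *ᵥ fun i => (b i : K) := by
    funext i
    have h := congrArg Subtype.val (b.sum_repr (v i))
    simp only [AddSubmonoidClass.coe_finsetSum, zsmul_eq_mul] at h
    simpa [Matrix.mulVec, dotProduct, P] using h.symm
  have hdet : (P.map (Int.castRingHom ℚ)).det = P.det := ((Int.castRingHom ℚ).map_det P).symm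
  rw [hv_eq, discr_of_matrix_mulVec, hdet] at hv ⊢
  have hP : P.det ≠ 0 := by rintro h; simp [h] at hv
  rw [abs_mul, abs_pow]
  exact le_mul_of_one_le_left (abs_nonneg _) (one_le_pow₀ (by exact_mod_cast Int.one_le_abs hP))

theorem Algebra.discr_pow_eq_det_vandermonde_sq (K : Type*) {L : Type*} (E : Type*) [Field K]
    [Field L] [Field E] [Algebra K L] [Algebra K E] [Module.Finite K L] [IsAlgClosed E]
    [Algebra.IsSeparable K L] {n : ℕ} (x : L) (e : Fin n ≃ (L →ₐ[K] E)) :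
    algebraMap K E (discr K fun i : Fin n => x ^ (i : ℕ)) =
      (vandermonde fun j => e j x).det ^ 2 := by
  rw [discr_eq_det_embeddingsMatrixReindex_pow_two K E _ e, ← det_transpose]
  congr 2
  ext i j
  simp [embeddingsMatrixReindex, embeddingsMatrix, vandermonde]

theorem Fin.sum_card_Ioi_mul_two (n : ℕ) : (∑ i : Fin n, #(Ioi i)) * 2 = n * (n - 1) := by
  simp only [Fin.card_Ioi]
  rw [Fin.sum_univ_eq_sum_range (fun k => n - 1 - k) n, Finset.sum_range_reflect (fun j => j) n]
  exact Finset.sum_range_id_mul_two n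

theorem Matrix.norm_det_vandermonde_sq_le {R : Type*} [NormedCommRing R] [NormOneClass R]
    {n : ℕ} (v : Fin n → R) {M : ℝ} (hv : ∀ i, ‖v i‖ ≤ M) :
    ‖(vandermonde v).det‖ ^ 2 ≤ (2 * M) ^ (n * (n - 1)) := by
  have hfactor (i j : Fin n) : ‖v j - v i‖ ≤ 2 * M :=
    (norm_sub_le _ _).trans (by linarith [hv i, hv j])
  have hdet : ‖(vandermonde v).det‖ ≤ (2 * M) ^ ∑ i : Fin n, #(Ioi i) := by
    rw [det_vandermonde, ← prod_pow_eq_pow_sum]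
    refine (Finset.norm_prod_le _ _).trans (prod_le_prod (fun _ _ => norm_nonneg _) fun i _ => ?_)
    rw [← prod_const]
    exact (Finset.norm_prod_le _ _).trans
      (prod_le_prod (fun _ _ => norm_nonneg _) fun j _ => hfactor i j)
  calc ‖(vandermonde v).det‖ ^ 2 ≤ ((2 * M) ^ ∑ i : Fin n, #(Ioi i)) ^ 2 :=
        pow_le_pow_left₀ (norm_nonneg _) hdet 2
    _ = (2 * M) ^ (n * (n - 1)) := by rw [← pow_mul, Fin.sum_card_Ioi_mul_two]

theorem Real.rpow_one_div_le_of_le_pow {x y : ℝ} {N : ℕ} (hN : N ≠ 0) (hx : 0 ≤ x) (hy : 0 ≤ y)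
    (h : x ≤ y ^ N) : x ^ (1 / (N : ℝ)) ≤ y := by
  rwa [one_div, Real.rpow_inv_le_iff_of_pos hx hy (by positivity), Real.rpow_natCast]

/-- for `K` totally real of prime degree `n`, an order `𝒪 ⊆ K` of
discriminant `D`, and `λ ∈ 𝒪 ∖ ℤ`, one has `max_i |σ_i(λ)| ≫_n D^{1/(n(n−1))}`. -/
theorem stmt_7 (n : ℕ) (hn : n.Prime) :
    ∃ c : ℝ, 0 < c ∧
      ∀ (K : Type) [Field K] [NumberField K],
        Module.finrank ℚ K = n →
        (∀ v : InfinitePlace K, v.IsReal) →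
        ∀ (O : Subalgebra ℤ K) (e : Module.Basis (Fin n) ℤ O) (D : ℝ),
          D = |((Matrix.of fun i j =>
            (Algebra.trace ℚ K ((e i : K) * (e j : K)))).det : ℚ)| →
          ∀ lam : K, lam ∈ O → (∀ m : ℤ, (m : K) ≠ lam) →
            ∃ σ : K →+* ℂ,
              c * D ^ ((1 : ℝ) / (n * (n - 1))) ≤ ‖σ lam‖ := by
  refine ⟨1 / 2, one_half_pos, ?_⟩
  intro K _ _ hK _ O e D hD lam hlamO hlamZ
  subst hK
  have : Nonempty (K →ₐ[ℚ] ℂ) := ⟨IsAlgClosed.lift⟩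
  obtain ⟨σ, hσ⟩ := Finite.exists_max fun σ : K →ₐ[ℚ] ℂ => ‖σ lam‖
  refine ⟨σ.toRingHom, ?_⟩
  have hlamInt : IsIntegral ℤ lam :=
    .of_mem_of_fg O (Module.Finite.iff_fg.mp (.of_basis e)) lam hlamO
  have hdeg := minpoly.natDegree_eq_finrank_of_prime hn
    (Rat.notMem_range_algebraMap_of_isIntegral hlamInt hlamZ)
  let emb : Fin (finrank ℚ K) ≃ (K →ₐ[ℚ] ℂ) :=
    (Fintype.equivFinOfCardEq (AlgHom.card ℚ K ℂ)).symm
  have hbound : D ≤ (2 * ‖σ lam‖) ^ (finrank ℚ K * (finrank ℚ K - 1)) :=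
    calc D = |(Algebra.discr ℚ fun i => (e i : K) : ℝ)| := by
          rw [hD, Algebra.discr_def, Rat.cast_abs]; rfl
      _ ≤ |(Algebra.discr ℚ fun i : Fin _ => lam ^ (i : ℕ) : ℝ)| := by
          exact_mod_cast Algebra.abs_discr_le_of_subalgebra e
            (fun i => ⟨lam ^ (i : ℕ), pow_mem hlamO _⟩) (Algebra.discr_pow_ne_zero hdeg)
      _ = ‖(vandermonde fun j => emb j lam).det‖ ^ 2 := by
          rw [← norm_pow, ← Algebra.discr_pow_eq_det_vandermonde_sq, eq_ratCast,
            Complex.norm_ratCast]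
      _ ≤ _ := norm_det_vandermonde_sq_le _ fun j => hσ _
  have hroot := Real.rpow_one_div_le_of_le_pow
    (Nat.mul_ne_zero hn.ne_zero (Nat.sub_ne_zero_of_lt hn.one_lt)) (hD ▸ by positivity)
    (by positivity) hbound
  rw [Nat.cast_mul, Nat.cast_sub hn.one_le, Nat.cast_one] at hroot
  change 1 / 2 * _ ≤ ‖σ lam‖
  linarith
end

section
/- Let Λ ⊂ ℝⁿ be a lattice of covolume ν, and let H be the group of diagonal matrices with positive entries and determinant 1 acting on ℝⁿ. Suppose there is D > 0 such that every nonzero vector (x₁,…,x_n) in every lattice in the H-orbit of Λ satisfies (max_i|x_i|)ⁿ · D^{1/2} ≥ ν. Then Λ has a reduced basis v₁,…,v_n with ν^{1/n} D^{−1/(2n)} ≪ ‖v₁‖ ≤ … ≤ ‖v_n‖ and ∏‖v_i‖ ≍ ν; in particular ‖v_n‖ ≪ ν^{1/n} D^{(n−1)/(2n)}, with implied constants depending only on n. -/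
/-!
Hermite's reduction. In the lattice spanned by independent vectors `v`, a shortest nonzero
vector `x₀` is primitive, hence the first vector of a basis `(x₀, w)`. Reduce the projections
`π w` orthogonal to `x₀` by induction and lift each reduced vector `u` to a lattice vector `z`
whose component along `x₀` has coefficient at most `1/2`; since `‖x₀‖ ≤ ‖z‖` this forces
`‖z‖² ≤ 4/3 ‖u‖²`. Together with `det Gram(x₀, w) = ‖x₀‖² det Gram(π w)` this gives a basis with
`(∏ ‖u_i‖)² ≤ (4/3)^(m choose 2) det Gram(v)`, and `det Gram = covolume²`.

In `EuclideanSpace ℝ (Fin n)` the sup norm is at most the Euclidean norm, which gives the upper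
bound on the product of the sup norms; the Leibniz formula gives `ν ≤ n! ∏ ‖v_i‖_∞`. The
hypothesis at `a = 1` bounds every `‖v_i‖_∞` below by `ν^(1/n) D^(-1/(2n))`, and dividing the
product bound by the other `n - 1` factors bounds each one above. Finally sort the basis.
-/

open Submodule Module Set Matrix Finset

theorem Module.Basis.exists_apply_zero_eq {R M : Type*} [CommRing R] [IsDomain R]
    [IsPrincipalIdealRing R] [AddCommGroup M] [Module R M] [Module.Free R M] [Module.Finite R M]
    {m : ℕ} (hM : finrank R M = m + 1) {x : M} (hx : x ≠ 0) [IsTorsionFree R (M ⧸ R ∙ x)] :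
    ∃ b : Basis (Fin (m + 1)) R M, b 0 = x := by
  let c := Module.finBasis R (M ⧸ R ∙ x)
  choose w hw using fun i => Submodule.Quotient.mk_surjective (R ∙ x) (c i)
  have hwc : (R ∙ x).mkQ ∘ w = c := funext hw
  have hwli : LinearIndependent R w := .of_comp (R ∙ x).mkQ (hwc ▸ c.linearIndependent)
  have hli : ∀ a : R, ∀ y ∈ span R (range w), a • x + y = 0 → a = 0 := by
    intro a y hy hay
    obtain ⟨d, rfl⟩ := (mem_span_range_iff_exists_fun R).mp hy
    have hd : ∑ i, d i • c i = 0 := by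
      have h := congrArg (R ∙ x).mkQ hay
      simp only [map_add, map_smul, map_sum, mkQ_apply, hw, map_zero,
        (Submodule.Quotient.mk_eq_zero _).mpr (mem_span_singleton_self x), smul_zero,
        zero_add] at h
      exact h
    have hd0 := Fintype.linearIndependent_iff.mp c.linearIndependent d hd
    simpa [hd0, hx] using hay
  have hsp : ∀ z : M, ∃ a : R, z + a • x ∈ span R (range w) := by
    intro z
    have hz : z - ∑ i, c.repr (Submodule.Quotient.mk z) i • w i ∈ R ∙ x := by
      rw [← Submodule.Quotient.mk_eq_zero, Submodule.Quotient.mk_sub, ← mkQ_apply, ← mkQ_apply,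
        map_sum]
      simp only [map_smul, mkQ_apply, hw, c.sum_repr, sub_self]
    obtain ⟨a, ha⟩ := mem_span_singleton.mp hz
    refine ⟨-a, ?_⟩
    rw [neg_smul, ha, neg_sub, add_sub_cancel]
    exact sum_mem fun i _ => smul_mem _ _ (subset_span (mem_range_self i))
  let b := Basis.mkFinCons x (Basis.span hwli) hli hsp
  have hcard : finrank R (M ⧸ R ∙ x) + 1 = m + 1 := by
    rw [← hM, finrank_eq_card_basis b, Fintype.card_fin]
  exact ⟨b.reindex (finCongr hcard), by simp [b]⟩

lemma Module.Basis.span_range_coe {ι R M : Type*} [Semiring R] [AddCommMonoid M] [Module R M]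
    {L : Submodule R M} (b : Basis ι R L) : span R (range fun i => (b i : M)) = L := by
  rw [show (fun i => (b i : M)) = L.subtype ∘ b from rfl, range_comp, span_image, b.span_eq,
    map_subtype_top]

lemma LinearIndependent.of_span_int_eq {E ι : Type*} [AddCommGroup E] [Module ℝ E] [Fintype ι]
    {u v : ι → E} (hv : LinearIndependent ℝ v) (h : span ℤ (range u) = span ℤ (range v)) :
    LinearIndependent ℝ u := by
  have hR : span ℝ (range u) = span ℝ (range v) := by
    rw [← span_span_of_tower ℤ ℝ (range u), h, span_span_of_tower]
  rw [linearIndependent_iff_card_eq_finrank_span, Set.finrank, hR, finrank_span_eq_card hv]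

section NormedSpace

variable {E : Type*} [NormedAddCommGroup E] [NormedSpace ℝ E]

lemma LinearIndependent.setFinite_inter_span_int [FiniteDimensional ℝ E] {ι : Type*} {v : ι → E}
    (hv : LinearIndependent ℝ v) {s : Set E} (hs : Bornology.IsBounded s) :
    (s ∩ span ℤ (range v)).Finite := by
  let b := Basis.extend hv.linearIndepOn_id
  have := Module.Finite.finite_basis b
  refine (ZSpan.setFinite_inter b hs).subset (inter_subset_inter_right _ (span_mono ?_))
  simpa [b] using hv.linearIndepOn_id.subset_extend (subset_univ _)

lemma LinearIndependent.exists_ne_zero_forall_norm_le [FiniteDimensional ℝ E] {ι : Type*}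
    {v : ι → E} (hv : LinearIndependent ℝ v) (i : ι) :
    ∃ x ∈ span ℤ (range v), x ≠ 0 ∧ ∀ y ∈ span ℤ (range v), y ≠ 0 → ‖x‖ ≤ ‖y‖ := by
  set S := (Metric.closedBall 0 ‖v i‖ ∩ (span ℤ (range v) : Set E)) \ {0}
  have hvi : v i ∈ S := ⟨⟨by simp, subset_span (mem_range_self i)⟩, hv.ne_zero i⟩
  obtain ⟨x, ⟨⟨hxB, hxL⟩, hx0⟩, hmin⟩ :=
    S.exists_min_image norm (hv.setFinite_inter_span_int Metric.isBounded_closedBall).sdiff ⟨_, hvi⟩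
  refine ⟨x, hxL, hx0, fun y hyL hy0 => ?_⟩
  by_cases hy : ‖y‖ ≤ ‖v i‖
  · exact hmin y ⟨⟨by simpa using hy, hyL⟩, hy0⟩
  · exact (mem_closedBall_zero_iff.mp hxB).trans (le_of_not_ge hy)

lemma exists_intCast_eq_of_smul_mem {L : Submodule ℤ E} {x : E} (hx : x ∈ L) (hx0 : x ≠ 0)
    (hmin : ∀ y ∈ L, y ≠ 0 → ‖x‖ ≤ ‖y‖) {t : ℝ} (ht : t • x ∈ L) : ∃ k : ℤ, t = k := by
  refine ⟨⌊t⌋, by_contra fun hne => ?_⟩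
  have hfract : Int.fract t • x ∈ L := by
    rw [Int.fract, sub_smul, Int.cast_smul_eq_zsmul]
    exact L.sub_mem ht (L.smul_mem _ hx)
  have hpos : 0 < Int.fract t := (Int.fract_nonneg t).lt_of_ne' (by rwa [Int.fract, sub_ne_zero])
  have hle := hmin _ hfract (smul_ne_zero hpos.ne' hx0)
  rw [norm_smul, Real.norm_of_nonneg hpos.le] at hle
  exact hle.not_gt (mul_lt_of_lt_one_left (norm_pos_iff.mpr hx0) (Int.fract_lt_one t))

lemma isTorsionFree_quotient_span_singleton {L : Submodule ℤ E} (x : L)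
    (hprim : ∀ t : ℝ, t • (x : E) ∈ L → ∃ k : ℤ, t = k) : IsTorsionFree ℤ (L ⧸ ℤ ∙ x) := by
  refine .of_smul_eq_zero fun k q hkq => or_iff_not_imp_left.mpr fun hk => ?_
  obtain ⟨y, rfl⟩ := Submodule.Quotient.mk_surjective _ q
  rw [← Submodule.Quotient.mk_smul, Submodule.Quotient.mk_eq_zero, mem_span_singleton] at hkq
  obtain ⟨a, ha⟩ := hkq
  have haE : (a : ℝ) • (x : E) = (k : ℝ) • (y : E) := by
    simpa [Int.cast_smul_eq_zsmul] using congrArg Subtype.val ha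
  have hy : ((a : ℝ) / k) • (x : E) = y := by
    rw [div_eq_inv_mul, mul_smul, haE, inv_smul_smul₀ (Int.cast_ne_zero.mpr hk)]
  obtain ⟨j, hj⟩ := hprim _ (hy ▸ y.2)
  rw [Submodule.Quotient.mk_eq_zero, mem_span_singleton]
  exact ⟨j, Subtype.ext (by rw [← hy, hj]; simp [Int.cast_smul_eq_zsmul])⟩

end NormedSpace

namespace Matrix

variable {E : Type*} [NormedAddCommGroup E] [InnerProductSpace ℝ E]

lemma gram_sum_smul {ι : Type*} [Fintype ι] (v : ι → E) (A : Matrix ι ι ℝ) :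
    gram ℝ (fun j => ∑ k, A k j • v k) = Aᵀ * gram ℝ v * A := by
  ext i j
  simp only [gram_apply, mul_apply, transpose_apply, sum_inner, inner_sum, real_inner_smul_left,
    real_inner_smul_right, Finset.sum_mul]
  exact Finset.sum_congr rfl fun _ _ => Finset.sum_congr rfl fun _ _ => by ring

lemma det_gram_sum_smul {ι : Type*} [Fintype ι] [DecidableEq ι] (v : ι → E)
    (A : Matrix ι ι ℝ) :
    (gram ℝ (fun j => ∑ k, A k j • v k)).det = A.det ^ 2 * (gram ℝ v).det := by
  rw [gram_sum_smul, det_mul, det_mul, det_transpose]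
  ring

lemma det_gram_basis_eq {ι : Type*} [Fintype ι] [DecidableEq ι] {L : Submodule ℤ E}
    (b' b : Basis ι ℤ L) :
    (gram ℝ (fun i => (b' i : E))).det = (gram ℝ (fun i => (b i : E))).det := by
  set A := b.toMatrix b'
  have hb' : (fun j => (b' j : E)) = fun j => ∑ k, (A.map (Int.cast : ℤ → ℝ)) k j • (b k : E) := by
    ext1 j
    rw [← b.sum_toMatrix_smul_self b' j]
    simp only [Submodule.coe_sum, Submodule.coe_smul, map_apply, Int.cast_smul_eq_zsmul, A]
  have hA : IsUnit A.det := IsUnit.of_mul_eq_one _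
    (by rw [← det_mul, b.toMatrix_mul_toMatrix_flip, det_one])
  have hAR : (A.map (Int.cast : ℤ → ℝ)).det = A.det := (RingHom.map_det (Int.castRingHom ℝ) A).symm
  rw [hb', det_gram_sum_smul, hAR, ← Int.cast_pow, Int.isUnit_sq hA, Int.cast_one, one_mul]

lemma det_gram_fin_cons_add_smul {m : ℕ} (x : E) (y : Fin m → E) (hy : ∀ i, inner ℝ x (y i) = 0)
    (c : Fin m → ℝ) :
    (gram ℝ (Fin.cons x fun i => y i + c i • x : Fin (m + 1) → E)).det =
      ‖x‖ ^ 2 * (gram ℝ y).det := by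
  set T : Matrix (Fin (m + 1)) (Fin (m + 1)) ℝ := updateRow 1 0 (Fin.cons 1 c)
  have hT : T.det = 1 := by
    rw [det_of_isUpperTriangular]
    · refine Finset.prod_eq_one fun i _ => ?_
      cases i using Fin.cases <;> simp [T, updateRow_apply]
    · intro i j hji
      have hi : i ≠ 0 := (lt_of_le_of_lt (Fin.zero_le j) hji).ne'
      have hij : i ≠ j := hji.ne'
      simp [T, updateRow_apply, hi, hij]
  have hcomb : (Fin.cons x fun i => y i + c i • x : Fin (m + 1) → E) =
      fun j => ∑ k, T k j • (Fin.cons x y : Fin (m + 1) → E) k := by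
    ext1 j
    cases j using Fin.cases <;>
      simp [T, Fin.sum_univ_succ, updateRow_apply, one_apply, Fin.succ_ne_zero, add_comm]
  rw [hcomb, det_gram_sum_smul, hT, one_pow, one_mul, det_succ_row_zero, Fin.sum_univ_succ]
  have hsub : (gram ℝ (Fin.cons x y : Fin (m + 1) → E)).submatrix Fin.succ Fin.succ = gram ℝ y :=
    rfl
  simp [hy, hsub]

end Matrix

section InnerProductSpace

variable {E : Type*} [NormedAddCommGroup E] [InnerProductSpace ℝ E]

lemma exists_eq_starProjection_orthogonal_add_smul (x y : E) :
    ∃ a : ℝ, y = (ℝ ∙ x)ᗮ.starProjection y + a • x := by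
  obtain ⟨a, ha⟩ := mem_span_singleton.mp ((ℝ ∙ x).starProjection_apply_mem y)
  exact ⟨a, by rw [ha, add_comm, starProjection_add_starProjection_orthogonal]⟩

lemma inner_starProjection_orthogonal_singleton (x y : E) :
    inner ℝ x ((ℝ ∙ x)ᗮ.starProjection y) = 0 :=
  mem_orthogonal_singleton_iff_inner_right.mp ((ℝ ∙ x)ᗮ.starProjection_apply_mem y)

lemma det_gram_fin_cons_eq_norm_sq_mul {m : ℕ} (x : E) (w : Fin m → E) :
    (gram ℝ (Fin.cons x w : Fin (m + 1) → E)).det =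
      ‖x‖ ^ 2 * (gram ℝ ((ℝ ∙ x)ᗮ.starProjection ∘ w)).det := by
  choose a ha using fun i => exists_eq_starProjection_orthogonal_add_smul x (w i)
  have hw : w = fun i => (ℝ ∙ x)ᗮ.starProjection (w i) + a i • x := funext ha
  conv_lhs => rw [hw]
  exact det_gram_fin_cons_add_smul x _ (fun i => inner_starProjection_orthogonal_singleton x _) a

lemma LinearIndependent.starProjection_orthogonal_singleton {m : ℕ} {x : E} {w : Fin m → E}
    (h : LinearIndependent ℝ (Fin.cons x w : Fin (m + 1) → E)) :
    LinearIndependent ℝ ((ℝ ∙ x)ᗮ.starProjection ∘ w) := by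
  rw [← det_gram_ne_zero_iff_linearIndependent] at h ⊢
  rw [det_gram_fin_cons_eq_norm_sq_mul] at h
  exact right_ne_zero_of_mul h

lemma exists_mem_starProjection_eq_sq_norm_le {L : Submodule ℤ E} {x₀ : E} (hx₀ : x₀ ∈ L)
    (hmin : ∀ y ∈ L, y ≠ 0 → ‖x₀‖ ≤ ‖y‖) {y : E} (hy : y ∈ L)
    (hπy : (ℝ ∙ x₀)ᗮ.starProjection y ≠ 0) :
    ∃ z ∈ L, (ℝ ∙ x₀)ᗮ.starProjection z = (ℝ ∙ x₀)ᗮ.starProjection y ∧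
      ‖z‖ ^ 2 ≤ 4 / 3 * ‖(ℝ ∙ x₀)ᗮ.starProjection y‖ ^ 2 := by
  set π := (ℝ ∙ x₀)ᗮ.starProjection
  obtain ⟨a, ha⟩ := exists_eq_starProjection_orthogonal_add_smul x₀ y
  set z := y - round a • x₀
  have hπz : π z = π y := by
    simp only [z, π, map_sub, map_zsmul, starProjection_orthogonalComplement_singleton_eq_zero,
      smul_zero, sub_zero]
  have hz : z = π y + (a - round a) • x₀ := by
    rw [sub_smul, Int.cast_smul_eq_zsmul]
    change y - round a • x₀ = _
    conv_lhs => rw [ha]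
    abel
  have hz0 : z ≠ 0 := fun h => hπy (by rw [← hπz, h, map_zero])
  have hnorm : ‖z‖ ^ 2 = ‖π y‖ ^ 2 + (a - round a) ^ 2 * ‖x₀‖ ^ 2 := by
    rw [hz, norm_add_sq_real, real_inner_smul_right, real_inner_comm,
      inner_starProjection_orthogonal_singleton, norm_smul, Real.norm_eq_abs, mul_pow, sq_abs]
    ring
  have hround : (a - round a) ^ 2 ≤ 1 / 4 := by
    have := abs_sub_round a
    rw [← sq_abs]
    nlinarith [abs_nonneg (a - round a)]
  have hzL : z ∈ L := L.sub_mem hy (L.smul_mem _ hx₀)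
  have hx₀z : ‖x₀‖ ^ 2 ≤ ‖z‖ ^ 2 := pow_le_pow_left₀ (norm_nonneg _) (hmin z hzL hz0) 2
  exact ⟨z, hzL, hπz, by nlinarith⟩

lemma span_int_fin_cons_eq {L : Submodule ℤ E} {x₀ : E} {m : ℕ} {w z : Fin m → E}
    (hL : span ℤ (range (Fin.cons x₀ w : Fin (m + 1) → E)) = L) (hzL : ∀ i, z i ∈ L)
    (hprim : ∀ t : ℝ, t • x₀ ∈ L → ∃ k : ℤ, t = k)
    (hπ : span ℤ (range ((ℝ ∙ x₀)ᗮ.starProjection ∘ z)) =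
      span ℤ (range ((ℝ ∙ x₀)ᗮ.starProjection ∘ w))) :
    span ℤ (range (Fin.cons x₀ z : Fin (m + 1) → E)) = L := by
  set π := (ℝ ∙ x₀)ᗮ.starProjection
  have hx₀L : x₀ ∈ L := hL ▸ subset_span ⟨0, rfl⟩
  have hwL : ∀ j, w j ∈ L := fun j => hL ▸ subset_span ⟨j.succ, Fin.cons_succ _ _ _⟩
  apply le_antisymm
  · rw [span_le]
    rintro _ ⟨j, rfl⟩
    cases j using Fin.cases
    · simpa using hx₀L
    · simpa using hzL _
  · rw [← hL, span_le]
    rintro _ ⟨j, rfl⟩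
    cases j using Fin.cases with
    | zero => exact subset_span ⟨0, rfl⟩
    | succ j =>
      have hπw : π (w j) ∈ span ℤ (range (π ∘ z)) := hπ ▸ subset_span ⟨j, rfl⟩
      obtain ⟨d, hd⟩ := (mem_span_range_iff_exists_fun ℤ).mp hπw
      set y := ∑ i, d i • z i
      obtain ⟨a, ha⟩ := exists_eq_starProjection_orthogonal_add_smul x₀ (w j - y)
      have hπ0 : π (w j - y) = 0 := by
        simp only [y, map_sub, map_sum, map_zsmul, ← hd, Function.comp_apply, sub_self]
      rw [hπ0, zero_add] at ha
      obtain ⟨k, rfl⟩ := hprim a (ha ▸ L.sub_mem (hwL j) (sum_mem fun i _ => L.smul_mem _ (hzL i)))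
      have hwj : w j = y + k • x₀ := by
        rw [← Int.cast_smul_eq_zsmul ℝ, ← ha]
        abel
      rw [Fin.cons_succ, hwj]
      exact add_mem (sum_mem fun i _ => smul_mem _ _ (subset_span ⟨i.succ, Fin.cons_succ _ _ _⟩))
        (smul_mem _ _ (subset_span ⟨0, rfl⟩))

lemma LinearIndependent.exists_fin_cons_span_int_eq {m : ℕ} {v : Fin (m + 1) → E}
    (hv : LinearIndependent ℝ v) {x₀ : E} (hx₀L : x₀ ∈ span ℤ (range v)) (hx₀ : x₀ ≠ 0)
    (hprim : ∀ t : ℝ, t • x₀ ∈ span ℤ (range v) → ∃ k : ℤ, t = k) :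
    ∃ w : Fin m → E, span ℤ (range (Fin.cons x₀ w : Fin (m + 1) → E)) = span ℤ (range v) ∧
      (gram ℝ (Fin.cons x₀ w : Fin (m + 1) → E)).det = (gram ℝ v).det := by
  let bv := Basis.span (hv.restrict_scalars' ℤ)
  have := Module.Free.of_basis bv
  have := Module.Finite.of_basis bv
  have := isTorsionFree_quotient_span_singleton ⟨x₀, hx₀L⟩ hprim
  obtain ⟨B, hB⟩ := Basis.exists_apply_zero_eq (x := (⟨x₀, hx₀L⟩ : span ℤ (range v)))
    (by rw [finrank_eq_card_basis bv, Fintype.card_fin]) (by simpa using hx₀)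
  have hBw : (fun i => (B i : E)) = Fin.cons x₀ fun i => B i.succ := by
    ext1 i
    cases i using Fin.cases <;> simp [hB]
  refine ⟨fun i => B i.succ, hBw ▸ B.span_range_coe, ?_⟩
  rw [← hBw, det_gram_basis_eq B bv]
  congr
  ext i
  exact congrArg Subtype.val (Basis.span_apply _ i)

theorem exists_span_int_eq_sq_prod_norm_le [FiniteDimensional ℝ E] {m : ℕ} (v : Fin m → E)
    (hv : LinearIndependent ℝ v) :
    ∃ u : Fin m → E, span ℤ (range u) = span ℤ (range v) ∧
      (∏ i, ‖u i‖) ^ 2 ≤ (4 / 3) ^ m.choose 2 * (gram ℝ v).det := by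
  induction m with
  | zero => exact ⟨v, rfl, by simp⟩
  | succ m ih =>
  obtain ⟨x₀, hx₀L, hx₀, hmin⟩ := hv.exists_ne_zero_forall_norm_le 0
  have hprim : ∀ t : ℝ, t • x₀ ∈ span ℤ (range v) → ∃ k : ℤ, t = k :=
    fun t => exists_intCast_eq_of_smul_mem hx₀L hx₀ hmin
  obtain ⟨w, hwL, hdet⟩ := hv.exists_fin_cons_span_int_eq hx₀L hx₀ hprim
  rw [det_gram_fin_cons_eq_norm_sq_mul] at hdet
  set π := (ℝ ∙ x₀)ᗮ.starProjection
  have hπw : LinearIndependent ℝ (π ∘ w) :=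
    (hv.of_span_int_eq hwL).starProjection_orthogonal_singleton
  obtain ⟨u, hu, hu_le⟩ := ih (π ∘ w) hπw
  have hlift : ∀ i, ∃ z ∈ span ℤ (range v), π z = u i ∧ ‖z‖ ^ 2 ≤ 4 / 3 * ‖u i‖ ^ 2 := by
    intro i
    obtain ⟨d, hd⟩ := (mem_span_range_iff_exists_fun ℤ).mp (hu ▸ subset_span ⟨i, rfl⟩ :
      u i ∈ span ℤ (range (π ∘ w)))
    have hπy : π (∑ j, d j • w j) = u i := by
      simp only [map_sum, map_zsmul, ← hd, Function.comp_apply]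
    exact hπy ▸ exists_mem_starProjection_eq_sq_norm_le hx₀L hmin
      (sum_mem fun j _ => smul_mem _ _ (hwL ▸ subset_span ⟨j.succ, Fin.cons_succ _ _ _⟩))
      (hπy ▸ (hπw.of_span_int_eq hu).ne_zero i)
  choose z hzL hπz hz using hlift
  have hπz : π ∘ z = u := funext hπz
  refine ⟨Fin.cons x₀ z, span_int_fin_cons_eq hwL hzL hprim (by rw [hπz, hu]), ?_⟩
  calc (∏ i, ‖(Fin.cons x₀ z : Fin (m + 1) → E) i‖) ^ 2 = ‖x₀‖ ^ 2 * ∏ i, ‖z i‖ ^ 2 := by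
        simp [Fin.prod_univ_succ, mul_pow, Finset.prod_pow]
    _ ≤ ‖x₀‖ ^ 2 * ∏ i, (4 / 3 * ‖u i‖ ^ 2) := by
        gcongr with i
        exact hz i
    _ = (4 / 3) ^ m * ‖x₀‖ ^ 2 * (∏ i, ‖u i‖) ^ 2 := by
        rw [prod_mul_distrib, prod_const, card_univ, Fintype.card_fin, Finset.prod_pow]
        ring
    _ ≤ (4 / 3) ^ m * ‖x₀‖ ^ 2 * ((4 / 3) ^ m.choose 2 * (gram ℝ (π ∘ w)).det) := by gcongr
    _ = (4 / 3) ^ (m + 1).choose 2 * (gram ℝ v).det := by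
        rw [← hdet, Nat.choose_succ_succ', Nat.choose_one_right, pow_add]
        ring

end InnerProductSpace

lemma Matrix.abs_det_le_factorial_mul_prod {ι : Type*} [Fintype ι] [DecidableEq ι]
    (A : Matrix ι ι ℝ) (c : ι → ℝ) (h : ∀ i j, |A i j| ≤ c j) :
    |A.det| ≤ (Fintype.card ι).factorial * ∏ j, c j := by
  rw [det_apply]
  refine (abs_sum_le_sum_abs _ _).trans ?_
  calc ∑ σ : Equiv.Perm ι, |Equiv.Perm.sign σ • ∏ i, A (σ i) i|
      ≤ ∑ _σ : Equiv.Perm ι, ∏ j, c j := by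
        refine sum_le_sum fun σ _ => ?_
        have hsign : |((Equiv.Perm.sign σ : ℤ) : ℝ)| = 1 := by
          rcases Int.units_eq_one_or (Equiv.Perm.sign σ) with h | h <;> simp [h]
        rw [Units.smul_def, zsmul_eq_mul, abs_mul, hsign, one_mul, abs_prod]
        exact prod_le_prod (fun _ _ => abs_nonneg _) fun i _ => h _ _
    _ = (Fintype.card ι).factorial * ∏ j, c j := by
        rw [sum_const, card_univ, Fintype.card_perm, nsmul_eq_mul]

lemma Finset.mul_pow_card_sub_one_le_prod {ι : Type*} [Fintype ι] [DecidableEq ι] {f : ι → ℝ}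
    {μ : ℝ} (hμ : 0 ≤ μ) (hf : ∀ j, μ ≤ f j) (i : ι) :
    f i * μ ^ (Fintype.card ι - 1) ≤ ∏ j, f j := by
  rw [← mul_prod_erase univ f (mem_univ i)]
  refine mul_le_mul_of_nonneg_left ?_ (hμ.trans (hf i))
  calc μ ^ (Fintype.card ι - 1) = ∏ _j ∈ univ.erase i, μ := by
        rw [prod_const, card_erase_of_mem (mem_univ _), card_univ]
    _ ≤ ∏ j ∈ univ.erase i, f j := prod_le_prod (fun _ _ => hμ) fun j _ => hf j

lemma EuclideanSpace.iSup_abs_le_norm {ι : Type*} [Fintype ι] (x : EuclideanSpace ℝ ι) :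
    ⨆ k, |x k| ≤ ‖x‖ :=
  Real.iSup_le (fun k => by simpa using PiLp.norm_apply_le x k) (norm_nonneg x)

namespace ZLattice

open MeasureTheory

section InnerProductSpace

variable {E : Type*} [NormedAddCommGroup E] [InnerProductSpace ℝ E] [FiniteDimensional ℝ E]
  [MeasurableSpace E] [BorelSpace E] (L : Submodule ℤ E) [DiscreteTopology L] [IsZLattice ℝ L]

lemma covolume_eq_abs_det {ι : Type*} [Fintype ι] [DecidableEq ι] (o : OrthonormalBasis ι ℝ E)
    (b : Basis ι ℤ L) : covolume L = |o.toBasis.det ((↑) ∘ b)| := by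
  rw [covolume_eq_det_mul_measureReal L volume b o.toBasis,
    measureReal_congr (ZSpan.fundamentalDomain_ae_parallelepiped _ volume), measureReal_def,
    o.coe_toBasis, o.volume_parallelepiped, ENNReal.toReal_one, mul_one]

lemma covolume_sq_eq_det_gram {ι : Type*} [Fintype ι] [DecidableEq ι] (b : Basis ι ℤ L) :
    covolume L ^ 2 = (gram ℝ fun i => (b i : E)).det := by
  have hcard : Fintype.card (Fin (finrank ℝ E)) = Fintype.card ι := by
    rw [Fintype.card_fin, ← ZLattice.rank ℝ L, finrank_eq_card_basis b]
  let o := (stdOrthonormalBasis ℝ E).reindex (Fintype.equivOfCardEq hcard)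
  have hM : o.toBasis.toMatrix ((↑) ∘ b) = of fun i j => (o.repr (b j : E)).ofLp i := by
    ext i j
    rw [Basis.toMatrix_apply, OrthonormalBasis.coe_toBasis_repr_apply]
    rfl
  rw [covolume_eq_abs_det L o b, sq_abs, Basis.det_apply, hM, gram_eq_conjTranspose_mul o, det_mul,
    det_conjTranspose, sq, star_trivial]

theorem exists_basis_sq_prod_norm_le {n : ℕ} (hn : finrank ℝ E = n) :
    ∃ b : Basis (Fin n) ℤ L,
      (∏ i, ‖(b i : E)‖) ^ 2 ≤ (4 / 3) ^ n.choose 2 * covolume L ^ 2 := by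
  have hcard : Fintype.card (Free.ChooseBasisIndex ℤ L) = n := by
    rw [← finrank_eq_card_chooseBasisIndex, ZLattice.rank ℝ L, hn]
  let b₀ := (Free.chooseBasis ℤ L).reindex (Fintype.equivFinOfCardEq hcard)
  have hv := (b₀.ofZLatticeBasis ℝ L).linearIndependent
  obtain ⟨u, hu, hu_le⟩ := exists_span_int_eq_sq_prod_norm_le _ hv
  have hu' : span ℤ (range u) = L := hu.trans (b₀.ofZLatticeBasis_span ℝ L)
  let b := (Basis.span ((hv.of_span_int_eq hu).restrict_scalars' ℤ)).map (LinearEquiv.ofEq _ _ hu')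
  refine ⟨b, ?_⟩
  rw [covolume_sq_eq_det_gram L b₀]
  convert hu_le using 4
  · simp only [b, Basis.map_apply, Basis.span_apply, LinearEquiv.coe_ofEq_apply]
  · exact funext fun i => (Basis.ofZLatticeBasis_apply ℝ L b₀ i).symm

end InnerProductSpace

lemma covolume_le_factorial_mul_prod_iSup_abs {ι : Type*} [Fintype ι] [DecidableEq ι]
    (L : Submodule ℤ (EuclideanSpace ℝ ι)) [DiscreteTopology L] [IsZLattice ℝ L]
    (b : Basis ι ℤ L) :
    covolume L ≤ (Fintype.card ι).factorial * ∏ i, ⨆ k, |(b i : EuclideanSpace ℝ ι) k| := by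
  rw [covolume_eq_abs_det L (EuclideanSpace.basisFun ι ℝ) b, Basis.det_apply]
  refine abs_det_le_factorial_mul_prod _ _ fun k i => ?_
  simpa [Basis.toMatrix_apply] using
    le_ciSup (f := fun k => |(b i : EuclideanSpace ℝ ι) k|) (Finite.bddAbove_range _) k

theorem exists_basis_prod_iSup_abs_le {n : ℕ} (L : Submodule ℤ (EuclideanSpace ℝ (Fin n)))
    [DiscreteTopology L] [IsZLattice ℝ L] :
    ∃ b : Basis (Fin n) ℤ L, ∏ i, ⨆ k, |(b i : EuclideanSpace ℝ (Fin n)) k| ≤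
      √((4 / 3) ^ n.choose 2) * covolume L := by
  obtain ⟨b, hb⟩ := exists_basis_sq_prod_norm_le L finrank_euclideanSpace_fin
  refine ⟨b, (prod_le_prod (fun i _ => Real.iSup_nonneg fun _ => abs_nonneg _)
    fun i _ => EuclideanSpace.iSup_abs_le_norm _).trans ?_⟩
  have hν := covolume_pos L volume
  rw [← pow_le_pow_iff_left₀ (prod_nonneg fun _ _ => norm_nonneg _) (by positivity) two_ne_zero,
    mul_pow, Real.sq_sqrt (by positivity)]
  exact hb

end ZLattice

lemma rpow_mul_rpow_neg_le_of_le_pow_mul_sqrt {n : ℕ} (hn : n ≠ 0) {ν D x : ℝ} (hν : 0 ≤ ν)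
    (hD : 0 < D) (hx : 0 ≤ x) (h : ν ≤ x ^ n * √D) :
    ν ^ ((1 : ℝ) / n) * D ^ (-(1 / (2 * (n : ℝ)))) ≤ x := by
  have hsqrt : √D = (D ^ (1 / (2 * (n : ℝ)))) ^ n := by
    rw [← Real.rpow_mul_natCast hD.le, Real.sqrt_eq_rpow]
    congr 1
    field_simp
  rw [Real.rpow_neg hD.le, ← pow_le_pow_iff_left₀ (by positivity) hx hn, mul_pow, one_div,
    Real.rpow_inv_natCast_pow hν hn, inv_pow, ← hsqrt, ← div_eq_mul_inv,
    div_le_iff₀ (by positivity)]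
  exact h

lemma le_mul_rpow_mul_rpow_of_mul_pow_le {n : ℕ} (hn : n ≠ 0) {ν D x c : ℝ} (hν : 0 < ν)
    (hD : 0 < D) (h : x * (ν ^ ((1 : ℝ) / n) * D ^ (-(1 / (2 * (n : ℝ))))) ^ (n - 1) ≤ c * ν) :
    x ≤ c * ν ^ ((1 : ℝ) / n) * D ^ (((n : ℝ) - 1) / (2 * n)) := by
  have hpow : D ^ (((n : ℝ) - 1) / (2 * n)) = (D ^ (1 / (2 * (n : ℝ)))) ^ (n - 1) := by
    rw [← Real.rpow_mul_natCast hD.le, Nat.cast_pred (Nat.pos_of_ne_zero hn)]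
    congr 1
    ring
  have hs : (ν ^ ((1 : ℝ) / n)) ^ n = ν := by rw [one_div, Real.rpow_inv_natCast_pow hν.le hn]
  rw [Real.rpow_neg hD.le] at h
  rw [hpow]
  set s := ν ^ ((1 : ℝ) / n)
  set t := D ^ (1 / (2 * (n : ℝ)))
  have hs0 : 0 < s := by positivity
  have ht0 : 0 < t := by positivity
  have hν' : ν = s * s ^ (n - 1) := by
    rw [← pow_succ', Nat.sub_add_cancel (Nat.pos_of_ne_zero hn), hs]
  rw [hν'] at h
  refine le_of_mul_le_mul_right (h.trans_eq ?_) (pow_pos (mul_pos hs0 (inv_pos.mpr ht0)) (n - 1))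
  rw [mul_pow, inv_pow]
  field_simp

/-- if every nonzero vector of every lattice in the diagonal orbit of `Λ`
satisfies `(max_i |x_i|)ⁿ √D ≥ ν`, then `Λ` has a reduced basis `v₁ ≤ … ≤ v_n` (in sup
norm) with `‖v₁‖ ≫ ν^{1/n} D^{−1/(2n)}`, `∏‖v_i‖ ≍ ν`, and `‖v_i‖ ≪ ν^{1/n} D^{(n−1)/(2n)}`. -/
theorem stmt_8 (n : ℕ) (hn : 1 ≤ n) :
    ∃ c₁ c₂ c₃ C : ℝ, 0 < c₁ ∧ 0 < c₂ ∧ 0 < c₃ ∧ 0 < C ∧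
      ∀ (Λ : Submodule ℤ (EuclideanSpace ℝ (Fin n)))
        [DiscreteTopology Λ] [IsZLattice ℝ Λ] (D : ℝ), 0 < D →
        (∀ a : Fin n → ℝ, (∀ i, 0 < a i) → ∏ i, a i = 1 →
          ∀ x ∈ Λ, x ≠ (0 : EuclideanSpace ℝ (Fin n)) →
            ZLattice.covolume Λ ≤ (⨆ i, |a i * x i|) ^ n * Real.sqrt D) →
        ∃ v : Module.Basis (Fin n) ℤ Λ,
          (∀ i j : Fin n, i ≤ j →
            (⨆ k, |(v i : EuclideanSpace ℝ (Fin n)) k|) ≤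
              ⨆ k, |(v j : EuclideanSpace ℝ (Fin n)) k|) ∧
          (c₁ * (ZLattice.covolume Λ) ^ ((1 : ℝ) / n) * D ^ (-(1 / (2 * (n : ℝ)))) ≤
            ⨆ k, |(v ⟨0, hn⟩ : EuclideanSpace ℝ (Fin n)) k|) ∧
          (c₂ * ZLattice.covolume Λ ≤
            ∏ i, ⨆ k, |(v i : EuclideanSpace ℝ (Fin n)) k|) ∧
          ((∏ i, ⨆ k, |(v i : EuclideanSpace ℝ (Fin n)) k|) ≤ c₃ * ZLattice.covolume Λ) ∧
          (∀ i, (⨆ k, |(v i : EuclideanSpace ℝ (Fin n)) k|) ≤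
            C * (ZLattice.covolume Λ) ^ ((1 : ℝ) / n) * D ^ (((n : ℝ) - 1) / (2 * n))) := by
  have hn0 : n ≠ 0 := by omega
  set K := √((4 / 3 : ℝ) ^ n.choose 2)
  refine ⟨1, 1 / n.factorial, K, K, one_pos, by positivity, by positivity, by positivity, ?_⟩
  intro Λ _ _ D hD hΛ
  have hν : 0 < ZLattice.covolume Λ := ZLattice.covolume_pos Λ MeasureTheory.volume
  obtain ⟨b₀, hprod_le⟩ := ZLattice.exists_basis_prod_iSup_abs_le Λ
  set f : Fin n → ℝ := fun i => ⨆ k, |(b₀ i : EuclideanSpace ℝ (Fin n)) k|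
  have hmin : ∀ i, ZLattice.covolume Λ ^ ((1 : ℝ) / n) * D ^ (-(1 / (2 * (n : ℝ)))) ≤ f i := by
    intro i
    refine rpow_mul_rpow_neg_le_of_le_pow_mul_sqrt hn0 hν.le hD
      (Real.iSup_nonneg fun _ => abs_nonneg _) ?_
    simpa using hΛ 1 (fun _ => one_pos) (by simp) _ (b₀ i).2 (by simpa using b₀.ne_zero i)
  let v := b₀.reindex (Tuple.sort f).symm
  have hv : ∀ i, v i = b₀ (Tuple.sort f i) := by simp [v]
  have hprod : ∏ i, ⨆ k, |(v i : EuclideanSpace ℝ (Fin n)) k| = ∏ i, f i := by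
    simp only [hv]
    exact Equiv.prod_comp _ f
  refine ⟨v, fun i j hij => by simpa [hv] using Tuple.monotone_sort f hij,
    by simpa [hv] using hmin _, ?_, hprod ▸ hprod_le, fun i => ?_⟩
  · rw [hprod, one_div_mul_eq_div, div_le_iff₀ (by positivity), mul_comm]
    simpa using ZLattice.covolume_le_factorial_mul_prod_iSup_abs Λ b₀
  · refine le_mul_rpow_mul_rpow_of_mul_pow_le hn0 hν hD (le_trans ?_ hprod_le)
    simpa [hv] using Finset.mul_pow_card_sub_one_le_prod (by positivity) hmin (Tuple.sort f i)
end
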